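/- If two finite CW complexes Y and Y' are cell equivalent (in the symmetric sense), then their face posets are isomorphic as partially ordered sets. -/

import Mathlib

/-!
A cell `a` lies below `b` exactly when `a = b`, or the base of `a` is nonempty and contained
in the base of `b`. Both conditions are preserved by any map carrying each base onto the
corresponding base; applying this to `f` with the cell bijection and to `g` with its inverse
shows that the bijection is an order isomorphism.
-/

/-- A finite CW complex, abstracted as a topological space together with a
finite set of (open) cells, each with a dimension. -/
structure FinCW where
  carrier : Type
  top : TopologicalSpace carrier
  cell : Type
  fin : Fintype cell
  cells : cell → Set carrier
  dim : cell → ℕ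

attribute [instance] FinCW.top FinCW.fin

namespace FinCW

/-- The face relation on cells: the transitive (and reflexive) closure of
`e' ≤ e` iff the closure of the cell `e` meets the cell `e'`. -/
def cellLE (Y : FinCW) : Y.cell → Y.cell → Prop :=
  Relation.ReflTransGen fun e' e => (closure (Y.cells e) ∩ Y.cells e').Nonempty

/-- The base `Y(e)` of a cell: the union of all cells `e' ≤ e`. -/
def base (Y : FinCW) (e : Y.cell) : Set Y.carrier :=
  ⋃ e' ∈ {e' | Y.cellLE e' e}, Y.cells e'

/-- Symmetric cell equivalence: homotopy inverse maps `f, g` together with a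
bijection of cells, such that `f` maps each base onto the corresponding base,
`g` maps it back, and the restrictions are homotopy inverses of each other. -/
def CellEquiv (Y Y' : FinCW) : Prop :=
  ∃ (f : C(Y.carrier, Y'.carrier)) (g : C(Y'.carrier, Y.carrier))
    (φ : Y.cell ≃ Y'.cell),
    (f.comp g).Homotopic (ContinuousMap.id _) ∧
    (g.comp f).Homotopic (ContinuousMap.id _) ∧
    ∀ e : Y.cell,
      f '' Y.base e = Y'.base (φ e) ∧
      g '' Y'.base (φ e) = Y.base e ∧
      ∃ (fr : C(↥(Y.base e), ↥(Y'.base (φ e))))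
        (gr : C(↥(Y'.base (φ e)), ↥(Y.base e))),
        (∀ x : ↥(Y.base e), (fr x : Y'.carrier) = f x) ∧
        (∀ y : ↥(Y'.base (φ e)), (gr y : Y.carrier) = g y) ∧
        (fr.comp gr).Homotopic (ContinuousMap.id _) ∧
        (gr.comp fr).Homotopic (ContinuousMap.id _)

variable (Y : FinCW)

lemma mem_base_iff {e : Y.cell} {x : Y.carrier} :
    x ∈ Y.base e ↔ ∃ e', Y.cellLE e' e ∧ x ∈ Y.cells e' := by
  simp [base]

lemma cells_subset_base (e : Y.cell) : Y.cells e ⊆ Y.base e :=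
  fun _ hx => (Y.mem_base_iff).2 ⟨e, .refl, hx⟩

lemma base_mono {a b : Y.cell} (h : Y.cellLE a b) : Y.base a ⊆ Y.base b := fun x hx => by
  obtain ⟨e', he', hxe⟩ := (Y.mem_base_iff).1 hx
  exact (Y.mem_base_iff).2 ⟨e', he'.trans h, hxe⟩

lemma base_nonempty_iff (e : Y.cell) : (Y.base e).Nonempty ↔ (Y.cells e).Nonempty := by
  refine ⟨fun ⟨x, hx⟩ => ?_, fun hne => hne.mono (Y.cells_subset_base e)⟩
  obtain ⟨e', he', hxe⟩ := (Y.mem_base_iff).1 hx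
  rcases he'.cases_tail with rfl | ⟨c, -, y, hy, -⟩
  · exact ⟨x, hxe⟩
  · exact closure_nonempty_iff.1 ⟨y, hy⟩

lemma cellLE_iff_eq_or_base_subset {a b : Y.cell} :
    Y.cellLE a b ↔ a = b ∨ ((Y.base a).Nonempty ∧ Y.base a ⊆ Y.base b) := by
  constructor
  · intro h
    rcases h.cases_head with rfl | ⟨c, ⟨y, -, hy⟩, -⟩
    · exact .inl rfl
    · exact .inr ⟨⟨y, Y.cells_subset_base a hy⟩, Y.base_mono h⟩
  · rintro (rfl | ⟨hne, hsub⟩)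
    · exact .refl
    · obtain ⟨x, hx⟩ := (Y.base_nonempty_iff a).1 hne
      obtain ⟨e', he', hxe⟩ := (Y.mem_base_iff).1 (hsub (Y.cells_subset_base a hx))
      exact (Relation.ReflTransGen.single ⟨x, subset_closure hxe, hx⟩).trans he'

variable {Y}

lemma cellLE_map_of_image_base_eq {Y' : FinCW} (f : Y.carrier → Y'.carrier)
    (φ : Y.cell → Y'.cell) (hf : ∀ e, f '' Y.base e = Y'.base (φ e)) {a b : Y.cell}
    (h : Y.cellLE a b) : Y'.cellLE (φ a) (φ b) := by
  rw [cellLE_iff_eq_or_base_subset] at h ⊢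
  rw [← hf a, ← hf b]
  rcases h with rfl | ⟨hne, hsub⟩
  · exact .inl rfl
  · exact .inr ⟨hne.image f, Set.image_mono hsub⟩

end FinCW

/-- If two finite CW complexes are cell equivalent (in the symmetric sense),
then their face posets are isomorphic: there is a bijection of cells
preserving the face relation in both directions. -/
theorem cellEquiv_facePoset_iso (Y Y' : FinCW) (h : FinCW.CellEquiv Y Y') :
    ∃ φ : Y.cell ≃ Y'.cell, ∀ a b : Y.cell,
      Y.cellLE a b ↔ Y'.cellLE (φ a) (φ b) := by
  obtain ⟨f, g, φ, -, -, hbase⟩ := h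
  have hf : ∀ e, f '' Y.base e = Y'.base (φ e) := fun e => (hbase e).1
  have hg : ∀ e', g '' Y'.base e' = Y.base (φ.symm e') := fun e' => by
    simpa using (hbase (φ.symm e')).2.1
  refine ⟨φ, fun a b => ⟨FinCW.cellLE_map_of_image_base_eq f φ hf, fun h => ?_⟩⟩
  simpa using FinCW.cellLE_map_of_image_base_eq g φ.symm hg h
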